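/- arXiv:1005.1507 — 2 statements merged into one kernel-verified Lean document; each statement's English description precedes it below -/
import Mathlib

section
/- For every φ ∈ L¹(ℝ) ∩ BV(ℝ), the double integral ∫_ℝ ∫_ℝ (φ(z) − φ(x))²/|z−x|^{1+λ} dz dx is finite and ∫_ℝ φ(x) L[φ](x) dx = −(c_λ/2) ∫_ℝ ∫_ℝ (φ(z) − φ(x))²/|z−x|^{1+λ} dz dx. -/
/-!
For `φ` of bounded variation, `∫ |φ(x + w) − φ(x)| dx ≤ |w| · V(φ)`: tile `ℝ` by the intervals
`[n w, (n + 1) w)` and note that, for each `x`, the increments of `φ` along `x + w ℤ` sum to at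
most `V(φ)`. Together with the trivial bound `2 ‖φ‖₁` this makes
`|φ(z) − φ(x)| / |z − x|^{1+λ}` integrable on `ℝ²` (the bound `|w| V` beats the singularity at
`w = 0` since `λ < 1`, the bound `2 ‖φ‖₁` the tail since `λ > 0`). As `φ` is bounded by `V(φ)`,
Fubini applies to `φ(x) (φ(z) − φ(x)) / |z − x|^{1+λ}`, and averaging this integrand with its
image under `x ↔ z` gives `−½ (φ(z) − φ(x))² / |z − x|^{1+λ}`.
-/

open MeasureTheory Filter Set
open scoped ENNReal

/-- The fractional Laplacian `L[φ](x) = c_λ ∫_{z ≠ 0} (φ(x+z) − φ(x))/|z|^{1+λ} dz`. -/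
noncomputable def fracLap (clam lam : ℝ) (φ : ℝ → ℝ) (x : ℝ) : ℝ :=
  clam * ∫ z in ({0}ᶜ : Set ℝ), (φ (x + z) - φ x) / |z| ^ (1 + lam)

theorem eVariationOn.tsum_edist_le {α E : Type*} [LinearOrder α] [PseudoEMetricSpace E]
    (f : α → E) {s : Set α} {u : ℤ → α} (hu : Monotone u) (us : ∀ n, u n ∈ s) :
    ∑' n : ℤ, edist (f (u (n + 1))) (f (u n)) ≤ eVariationOn f s := by
  rw [ENNReal.tsum_eq_iSup_sum]
  refine iSup_le fun S => ?_
  set N : ℕ := S.sup Int.natAbs + 1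
  have hS : S ⊆ (Finset.range (2 * N)).image fun i : ℕ => (i : ℤ) - N := by
    intro n hn
    have : n.natAbs ≤ S.sup Int.natAbs := Finset.le_sup (f := Int.natAbs) hn
    refine Finset.mem_image.2 ⟨(n + N).toNat, Finset.mem_range.2 (by omega), by omega⟩
  calc ∑ n ∈ S, edist (f (u (n + 1))) (f (u n))
      ≤ ∑ n ∈ (Finset.range (2 * N)).image (fun i : ℕ => (i : ℤ) - N),
          edist (f (u (n + 1))) (f (u n)) := Finset.sum_le_sum_of_subset hS
    _ = ∑ i ∈ Finset.range (2 * N), edist (f (u (↑(i + 1) - N))) (f (u (i - N))) := by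
        rw [Finset.sum_image fun i _ j _ h => by simpa using h]
        push_cast
        simp only [add_sub_right_comm]
    _ ≤ eVariationOn f s :=
        eVariationOn.sum_le (u := fun i : ℕ => u (i - N)) (fun i j h => hu (by omega)) fun i => us _

theorem tsum_lintegral_le_lintegral_tsum {α ι : Type*} [MeasurableSpace α] {μ : Measure α}
    (f : ι → α → ℝ≥0∞) : ∑' i, ∫⁻ a, f i a ∂μ ≤ ∫⁻ a, ∑' i, f i a ∂μ := by
  classical
  rw [ENNReal.tsum_eq_iSup_sum]
  refine iSup_le fun s => le_trans ?_ (lintegral_mono fun a => ENNReal.sum_le_tsum s)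
  induction s using Finset.induction_on with
  | empty => simp
  | insert i s hi ih =>
    simp only [Finset.sum_insert hi]
    exact (add_le_add_right ih _).trans (le_lintegral_add _ _)

theorem lintegral_edist_add_le_mul_eVariationOn_of_pos {E : Type*} [PseudoEMetricSpace E]
    (f : ℝ → E) {h : ℝ} (hh : 0 < h) :
    ∫⁻ x, edist (f (x + h)) (f x) ≤ ENNReal.ofReal h * eVariationOn f univ := by
  set F : ℝ → ℝ≥0∞ := fun x => edist (f (x + h)) (f x)
  calc ∫⁻ x, F x = ∑' n : ℤ, ∫⁻ x in Ico (0 + n • h) (0 + (n + 1) • h), F x := by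
        rw [← lintegral_iUnion (fun n => measurableSet_Ico) (pairwise_disjoint_Ico_add_zsmul 0 h),
          iUnion_Ico_add_zsmul hh, Measure.restrict_univ]
    _ = ∑' n : ℤ, ∫⁻ x in Ico 0 h, F (x + n • h) := by
        refine tsum_congr fun n => ?_
        rw [← (measurePreserving_add_right volume (n • h)).setLIntegral_comp_preimage_emb
          (measurableEmbedding_addRight _), preimage_add_const_Ico]
        congr 2; simp [add_smul]
    _ ≤ ∫⁻ x in Ico 0 h, ∑' n : ℤ, F (x + n • h) := tsum_lintegral_le_lintegral_tsum _
    _ ≤ ∫⁻ x in Ico 0 h, eVariationOn f univ := by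
        refine lintegral_mono fun x => ?_
        convert eVariationOn.tsum_edist_le f (u := fun n : ℤ => x + n • h)
          (fun m n hmn => by simpa using zsmul_le_zsmul_left hh.le hmn) (fun _ => mem_univ _)
          using 4 with n
        simp [add_smul, add_assoc]
    _ = ENNReal.ofReal h * eVariationOn f univ := by
        rw [setLIntegral_const, Real.volume_Ico, sub_zero, mul_comm]

theorem lintegral_edist_add_le_mul_eVariationOn {E : Type*} [PseudoEMetricSpace E] (f : ℝ → E)
    (h : ℝ) :
    ∫⁻ x, edist (f (x + h)) (f x) ≤ ENNReal.ofReal |h| * eVariationOn f univ := by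
  rcases lt_trichotomy h 0 with hh | rfl | hh
  · rw [abs_of_neg hh, ← lintegral_add_right_eq_self _ (-h)]
    simpa [edist_comm] using lintegral_edist_add_le_mul_eVariationOn_of_pos f (neg_pos.2 hh)
  · simp
  · simpa [abs_of_pos hh] using lintegral_edist_add_le_mul_eVariationOn_of_pos f hh

theorem LocallyBoundedVariationOn.measurable {f : ℝ → ℝ} (hf : LocallyBoundedVariationOn f univ) :
    Measurable f := by
  obtain ⟨p, q, hp, hq, rfl⟩ := hf.exists_monotoneOn_sub_monotoneOn
  exact (monotoneOn_univ.1 hp).measurable.sub (monotoneOn_univ.1 hq).measurable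

theorem MeasureTheory.Integrable.enorm_le_eVariationOn {E : Type*} [NormedAddCommGroup E]
    {f : ℝ → E} (hf : Integrable f) (x : ℝ) : ‖f x‖ₑ ≤ eVariationOn f univ := by
  by_contra! hx
  have hε : 0 < ‖f x‖ₑ - eVariationOn f univ := tsub_pos_of_lt hx
  have hbelow : ∀ y, ‖f x‖ₑ - eVariationOn f univ ≤ ‖f y‖ₑ := fun y => by
    rw [tsub_le_iff_right]
    calc ‖f x‖ₑ ≤ ‖f y‖ₑ + ‖f x - f y‖ₑ := by simpa using enorm_add_le (f y) (f x - f y)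
      _ ≤ ‖f y‖ₑ + eVariationOn f univ := by
        rw [← edist_eq_enorm_sub]
        gcongr
        exact eVariationOn.edist_le f (mem_univ x) (mem_univ y)
  have := (lintegral_mono hbelow).trans_lt hf.2
  simp [hε.ne'] at this

theorem integrableOn_abs_rpow_Icc {r : ℝ} (hr : -1 < r) :
    IntegrableOn (fun x : ℝ => |x| ^ r) (Icc (-1) 1) := by
  refine (locallyIntegrable_of_norm_le_rpow (μ := volume) (C := 1) (α := -r) (by simp)
    (by simp; linarith) (Eventually.of_forall fun x => ?_) ?_).integrableOn_isCompact isCompact_Icc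
  · simp [abs_of_nonneg (Real.rpow_nonneg (abs_nonneg x) r)]
  · exact (measurable_abs.pow_const r).aestronglyMeasurable

theorem integrableOn_abs_rpow_compl_Icc {r : ℝ} (hr : r < -1) :
    IntegrableOn (fun x : ℝ => |x| ^ r) (Icc (-1) 1)ᶜ := by
  have h : Integrable ((Ioi 1).indicator fun x : ℝ => x ^ r) :=
    (integrable_indicator_iff measurableSet_Ioi).2 ((integrableOn_Ioi_rpow_iff one_pos).2 hr)
  rw [← integrable_indicator_iff measurableSet_Icc.compl]
  refine (h.add h.comp_neg).congr (Eventually.of_forall fun x => ?_)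
  rcases lt_or_ge x (-1) with hx | hx
  · simp [indicator, hx.not_ge, abs_of_neg (by linarith : x < 0), show 1 < -x by linarith,
      show ¬ 1 < x by linarith]
  rcases le_or_gt x 1 with hx' | hx'
  · simp [indicator, hx, hx', show ¬ 1 < -x by linarith]
  · simp [indicator, hx', hx'.not_ge, abs_of_pos (by linarith : 0 < x), show ¬ 1 < -x by linarith]

section Kernel

variable {φ : ℝ → ℝ} {lam : ℝ}

theorem lintegral_enorm_sub_le_two_mul (hφ : AEMeasurable φ) (w : ℝ) :
    ∫⁻ x, ‖φ (x + w) - φ x‖ₑ ≤ 2 * ∫⁻ x, ‖φ x‖ₑ := by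
  calc ∫⁻ x, ‖φ (x + w) - φ x‖ₑ ≤ ∫⁻ x, (‖φ (x + w)‖ₑ + ‖φ x‖ₑ) :=
        lintegral_mono fun x => enorm_sub_le
    _ = 2 * ∫⁻ x, ‖φ x‖ₑ := by
      rw [lintegral_add_right' _ hφ.enorm, lintegral_add_right_eq_self (fun x => ‖φ x‖ₑ) w, two_mul]

theorem lintegral_lintegral_enorm_sub_mul_rpow_lt_top (hlam : lam ∈ Ioo (0 : ℝ) 1)
    (hφ : Integrable φ) (hbv : eVariationOn φ univ ≠ ⊤) :
    ∫⁻ w, (∫⁻ x, ‖φ (x + w) - φ x‖ₑ) * ‖|w| ^ (-(1 + lam))‖ₑ < ∞ := by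
  obtain ⟨hlam0, hlam1⟩ := hlam
  rw [← lintegral_add_compl _ (measurableSet_Icc (a := -1) (b := 1))]
  refine ENNReal.add_lt_top.2 ⟨?_, ?_⟩
  · calc ∫⁻ w in Icc (-1 : ℝ) 1, (∫⁻ x, ‖φ (x + w) - φ x‖ₑ) * ‖|w| ^ (-(1 + lam))‖ₑ
        ≤ ∫⁻ w in Icc (-1 : ℝ) 1, eVariationOn φ univ * ‖|w| ^ (-lam)‖ₑ := by
          refine lintegral_mono fun w => ?_
          have hw : |w| ^ (-lam) = |w| * |w| ^ (-(1 + lam)) := by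
            rw [← Real.rpow_one_add' (abs_nonneg w) (by linarith)]
            ring_nf
          calc (∫⁻ x, ‖φ (x + w) - φ x‖ₑ) * ‖|w| ^ (-(1 + lam))‖ₑ
              ≤ ENNReal.ofReal |w| * eVariationOn φ univ * ‖|w| ^ (-(1 + lam))‖ₑ := by
                gcongr
                simpa only [edist_eq_enorm_sub] using lintegral_edist_add_le_mul_eVariationOn φ w
            _ = eVariationOn φ univ * ‖|w| ^ (-lam)‖ₑ := by
                rw [hw, enorm_mul, Real.enorm_eq_ofReal_abs |w|, abs_abs]
                ring
      _ < ∞ := by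
          rw [lintegral_const_mul' _ _ hbv]
          exact ENNReal.mul_lt_top hbv.lt_top (integrableOn_abs_rpow_Icc (by linarith)).2
  · calc ∫⁻ w in (Icc (-1 : ℝ) 1)ᶜ, (∫⁻ x, ‖φ (x + w) - φ x‖ₑ) * ‖|w| ^ (-(1 + lam))‖ₑ
        ≤ ∫⁻ w in (Icc (-1 : ℝ) 1)ᶜ, (2 * ∫⁻ x, ‖φ x‖ₑ) * ‖|w| ^ (-(1 + lam))‖ₑ := by
          gcongr with w
          exact lintegral_enorm_sub_le_two_mul hφ.aemeasurable w
      _ < ∞ := by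
          rw [lintegral_const_mul' _ _ (by finiteness [hφ.2.ne])]
          exact ENNReal.mul_lt_top (by finiteness [hφ.2.ne])
            (integrableOn_abs_rpow_compl_Icc (by linarith)).2

theorem integrable_sub_div_abs_sub_rpow (hlam : lam ∈ Ioo (0 : ℝ) 1) (hφ : Integrable φ)
    (hbv : eVariationOn φ univ ≠ ⊤) :
    Integrable (fun p : ℝ × ℝ => (φ p.2 - φ p.1) / |p.2 - p.1| ^ (1 + lam))
      (volume.prod volume) := by
  have hm : Measurable φ := (BoundedVariationOn.locallyBoundedVariationOn hbv).measurable
  refine ⟨Measurable.aestronglyMeasurable (by fun_prop), ?_⟩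
  calc ∫⁻ p : ℝ × ℝ, ‖(φ p.2 - φ p.1) / |p.2 - p.1| ^ (1 + lam)‖ₑ ∂volume.prod volume
      = ∫⁻ q : ℝ × ℝ, ‖φ (q.1 + q.2) - φ q.1‖ₑ * ‖|q.2| ^ (-(1 + lam))‖ₑ
          ∂volume.prod volume := by
        rw [← (measurePreserving_prod_add volume volume).lintegral_comp_emb
          (MeasurableEquiv.shearAddRight ℝ).measurableEmbedding]
        simp only [div_eq_mul_inv, enorm_mul, add_sub_cancel_left,
          Real.rpow_neg (abs_nonneg _)]
    _ = ∫⁻ w, (∫⁻ x, ‖φ (x + w) - φ x‖ₑ) * ‖|w| ^ (-(1 + lam))‖ₑ := by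
        rw [lintegral_prod_symm' _ (by fun_prop)]
        exact lintegral_congr fun w =>
          lintegral_mul_const' ‖|w| ^ (-(1 + lam))‖ₑ (fun x => ‖φ (x + w) - φ x‖ₑ) enorm_ne_top
    _ < ∞ := lintegral_lintegral_enorm_sub_mul_rpow_lt_top hlam hφ hbv

end Kernel

theorem integral_mul_eq_neg_half_integral_sub_mul_of_antisymm {α : Type*} [MeasurableSpace α]
    {μ : Measure α} [SFinite μ] {f : α → ℝ} {k : α × α → ℝ} (hk : ∀ p, k p.swap = -k p)
    (hfk : Integrable (fun p => f p.1 * k p) (μ.prod μ)) :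
    ∫ p, f p.1 * k p ∂μ.prod μ = -(1 / 2) * ∫ p, (f p.2 - f p.1) * k p ∂μ.prod μ := by
  have hswap : ∫ p, f p.2 * k p ∂μ.prod μ = -∫ p, f p.1 * k p ∂μ.prod μ := by
    rw [← integral_prod_swap, ← integral_neg]
    simp [hk]
  have hfk' : Integrable (fun p => f p.2 * k p) (μ.prod μ) := by
    refine hfk.swap.neg.congr (Eventually.of_forall fun p => ?_)
    simp [hk]
  simp_rw [sub_mul]
  rw [integral_sub hfk' hfk, hswap]
  ring

theorem fracLap_eq_integral (clam lam : ℝ) (φ : ℝ → ℝ) (x : ℝ) :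
    fracLap clam lam φ x = clam * ∫ z, (φ z - φ x) / |z - x| ^ (1 + lam) := by
  rw [fracLap, restrict_compl_singleton,
    ← integral_add_left_eq_self (fun z => (φ z - φ x) / |z - x| ^ (1 + lam)) x]
  simp_rw [add_sub_cancel_left]

theorem fracLap_energy_identity_general (lam : ℝ) (hlam : lam ∈ Set.Ioo (0 : ℝ) 1)
    (clam : ℝ)
    (φ : ℝ → ℝ) (hφ1 : Integrable φ) (hφbv : eVariationOn φ Set.univ ≠ ⊤) :
    Integrable (fun p : ℝ × ℝ => (φ p.2 - φ p.1) ^ 2 / |p.2 - p.1| ^ (1 + lam)) ∧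
    ∫ x : ℝ, φ x * fracLap clam lam φ x =
      -(clam / 2) * ∫ x : ℝ, ∫ z : ℝ, (φ z - φ x) ^ 2 / |z - x| ^ (1 + lam) := by
  have hm : Measurable φ := (BoundedVariationOn.locallyBoundedVariationOn hφbv).measurable
  have hφ_le (x : ℝ) : ‖φ x‖ ≤ (eVariationOn φ univ).toReal := by
    simpa using ENNReal.toReal_mono hφbv (hφ1.enorm_le_eVariationOn x)
  set k := fun p : ℝ × ℝ => (φ p.2 - φ p.1) / |p.2 - p.1| ^ (1 + lam)
  have hk : Integrable k (volume.prod volume) := integrable_sub_div_abs_sub_rpow hlam hφ1 hφbv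
  have hφk : Integrable (fun p => φ p.1 * k p) (volume.prod volume) :=
    hk.bdd_mul (hm.comp measurable_fst).aestronglyMeasurable (.of_forall fun p => hφ_le p.1)
  have hsq : (fun p : ℝ × ℝ => (φ p.2 - φ p.1) ^ 2 / |p.2 - p.1| ^ (1 + lam)) =
      fun p => (φ p.2 - φ p.1) * k p := by
    ext p; simp only [k]; ring
  have hg : Integrable (fun p : ℝ × ℝ => (φ p.2 - φ p.1) ^ 2 / |p.2 - p.1| ^ (1 + lam))
      (volume.prod volume) := hsq ▸ hk.bdd_mul (by fun_prop) (.of_forall fun p =>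
        BoundedVariationOn.dist_le hφbv (mem_univ p.2) (mem_univ p.1))
  refine ⟨hg, ?_⟩
  calc ∫ x, φ x * fracLap clam lam φ x = clam * ∫ x, ∫ z, φ x * k (x, z) := by
        simp_rw [fracLap_eq_integral, mul_left_comm (φ _), ← integral_const_mul]
        rfl
    _ = clam * (-(1 / 2) * ∫ p, (φ p.2 - φ p.1) * k p ∂volume.prod volume) := by
        rw [← integral_prod _ hφk,
          integral_mul_eq_neg_half_integral_sub_mul_of_antisymm (fun p => ?_) hφk]
        simp only [k, Prod.fst_swap, Prod.snd_swap, abs_sub_comm p.1 p.2, ← neg_div, neg_sub]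
    _ = -(clam / 2) * ∫ x, ∫ z, (φ z - φ x) ^ 2 / |z - x| ^ (1 + lam) := by
        rw [← integral_prod _ hg, hsq]
        ring

/-- For every `φ ∈ L¹(ℝ) ∩ BV(ℝ)`, the double integral
`∫∫ (φ(z) − φ(x))²/|z−x|^{1+λ} dz dx` is finite and
`∫ φ L[φ] = −(c_λ/2) ∫∫ (φ(z) − φ(x))²/|z−x|^{1+λ} dz dx`. -/
theorem fracLap_energy_identity (lam : ℝ) (hlam : lam ∈ Set.Ioo (0 : ℝ) 1)
    (clam : ℝ) (hclam : 0 < clam)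
    (φ : ℝ → ℝ) (hφ1 : Integrable φ) (hφbv : eVariationOn φ Set.univ ≠ ⊤) :
    Integrable (fun p : ℝ × ℝ => (φ p.2 - φ p.1) ^ 2 / |p.2 - p.1| ^ (1 + lam)) ∧
    ∫ x : ℝ, φ x * fracLap clam lam φ x =
      -(clam / 2) * ∫ x : ℝ, ∫ z : ℝ, (φ z - φ x) ^ 2 / |z - x| ^ (1 + lam) :=
  fracLap_energy_identity_general lam hlam clam φ hφ1 hφbv
end

section
/- Assume the CFL condition. Then the one-step scheme map is monotone: for all summable sequences U = (U_j)_{j∈ℤ} and V = (V_j)_{j∈ℤ} with U_j ≤ V_j for every j ∈ ℤ, one has S(U)_i ≤ S(V)_i for every i ∈ ℤ. -/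
open MeasureTheory Filter Set

/-- Indicator function of the cell `I_j = (jΔx, (j+1)Δx)`. -/
noncomputable def cellInd (Δx : ℝ) (j : ℤ) : ℝ → ℝ :=
  Set.indicator (Set.Ioo ((j : ℝ) * Δx) (((j : ℝ) + 1) * Δx)) 1

/-- The weights `G^i_j = ∫_{I_i} L[1_{I_j}](x) dx`. -/
noncomputable def Gw (clam lam Δx : ℝ) (i j : ℤ) : ℝ :=
  ∫ x in Set.Ioo ((i : ℝ) * Δx) (((i : ℝ) + 1) * Δx), fracLap clam lam (cellInd Δx j) x

/-- `A(u) = ∫_0^u a(s) ds`. -/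
noncomputable def Aint (a : ℝ → ℝ) (u : ℝ) : ℝ := ∫ s in (0:ℝ)..u, a s

/-- One step of the explicit scheme. -/
noncomputable def schemeStep (clam lam Δx Δt b : ℝ) (fhat : ℝ → ℝ → ℝ) (a : ℝ → ℝ)
    (U : ℤ → ℝ) (i : ℤ) : ℝ :=
  U i - (Δt / Δx) * (fhat (U i) (U (i + 1)) - fhat (U (i - 1)) (U i))
    + (Δt / Δx ^ 2) * (Aint a (U (i + 1)) - 2 * Aint a (U i) + Aint a (U (i - 1)))
    + (b * Δt / Δx) * ∑' j : ℤ, Gw clam lam Δx i j * U j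

/-- The scheme iterates: `U^0_i = (1/Δx)∫_{I_i} u₀` and `U^{n+1} = S(U^n)`. -/
noncomputable def Uiter (clam lam Δx Δt b : ℝ) (fhat : ℝ → ℝ → ℝ) (a : ℝ → ℝ)
    (u₀ : ℝ → ℝ) : ℕ → ℤ → ℝ
  | 0 => fun i => (1 / Δx) * ∫ x in Set.Ioo ((i : ℝ) * Δx) (((i : ℝ) + 1) * Δx), u₀ x
  | n + 1 => schemeStep clam lam Δx Δt b fhat a (Uiter clam lam Δx Δt b fhat a u₀ n)

/-- `d_λ = c_λ ( ∫_{|z|<1} |z|^{−λ} dz + ∫_{|z|>1} |z|^{−1−λ} dz )`. -/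
noncomputable def dlam (clam lam : ℝ) : ℝ :=
  clam * ((∫ z in {z : ℝ | |z| < 1}, |z| ^ (-lam)) + ∫ z in {z : ℝ | 1 < |z|}, |z| ^ (-1 - lam))

/-- The CFL condition: `f̂` is C¹ with bounded partial derivatives and
`(Δt/Δx)(‖∂₁f̂‖_∞ + ‖∂₂f̂‖_∞) + (2Δt/Δx²)‖a‖_∞ + b d_λ Δt/Δx^λ ≤ 1`. -/
def CFL (clam lam Δx Δt b : ℝ) (fhat : ℝ → ℝ → ℝ) (a : ℝ → ℝ) : Prop :=
  ContDiff ℝ 1 (fun p : ℝ × ℝ => fhat p.1 p.2) ∧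
  ∃ M1 M2 Ma : ℝ,
    (∀ u v : ℝ, |deriv (fun s => fhat s v) u| ≤ M1) ∧
    (∀ u v : ℝ, |deriv (fun s => fhat u s) v| ≤ M2) ∧
    (∀ s : ℝ, |a s| ≤ Ma) ∧
    (Δt / Δx) * (M1 + M2) + (2 * Δt / Δx ^ 2) * Ma + b * dlam clam lam * Δt / Δx ^ lam ≤ 1

/-- Standing assumptions on the data `f`, `a` and the numerical flux `f̂`. -/
structure SchemeData (f a : ℝ → ℝ) (fhat : ℝ → ℝ → ℝ) : Prop where
  hfLip : ∃ K : NNReal, LipschitzWith K f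
  hf0 : f 0 = 0
  haLip : ∃ K : NNReal, LipschitzWith K a
  haNonneg : ∀ s : ℝ, 0 ≤ a s
  haBdd : ∃ M : ℝ, ∀ s : ℝ, a s ≤ M
  hfhatLip : ∃ K : NNReal, LipschitzWith K (fun p : ℝ × ℝ => fhat p.1 p.2)
  hconsistent : ∀ u : ℝ, fhat u u = f u
  hmono1 : ∀ v : ℝ, Monotone (fun u => fhat u v)
  hmono2 : ∀ u : ℝ, Antitone (fun v => fhat u v)

/-!
Fix a cell `i` and put `d = V_i - U_i ≥ 0`. By the monotonicity of `f̂` and of `A` (as `a ≥ 0`),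
the neighbouring values `U_{i±1} ≤ V_{i±1}` only help, and so does every `U_j ≤ V_j` with `j ≠ i`
in the nonlocal term, because `G^i_j = c_λ ∫_{I_i} ∫_{x+z ∈ I_j} |z|^{-1-λ} dz dx ≥ 0`. What is left
is linear in `d`: the flux difference costs at most `(‖∂₁f̂‖ + ‖∂₂f̂‖) d`, the diffusion at most
`2‖a‖ d`, and the diagonal weight is exactly `G^i_i = -d_λ Δx^{1-λ}`, so the CFL condition bounds
the total cost by `d`. Since `1_{I_j} ≤ 1 - 1_{I_i}`, also `0 ≤ G^i_j ≤ -G^i_i`, which makes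
`∑_j G^i_j U_j` summable.
-/

section Kernel

variable {lam : ℝ}

lemma integrableOn_Ici_inv_abs_rpow (hlam : 0 < lam) {c : ℝ} (hc : 0 < c) :
    IntegrableOn (fun z : ℝ => (|z| ^ (1 + lam))⁻¹) (Ici c) := by
  rw [integrableOn_Ici_iff_integrableOn_Ioi]
  refine (integrableOn_Ioi_rpow_of_lt (by linarith : -(1 + lam) < -1) hc).congr_fun
    (fun z hz => ?_) measurableSet_Ioi
  simp only [abs_of_pos (hc.trans hz), Real.rpow_neg (hc.trans hz).le]

lemma integral_Ici_inv_abs_rpow (hlam : 0 < lam) {c : ℝ} (hc : 0 < c) :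
    ∫ z in Ici c, (|z| ^ (1 + lam))⁻¹ = c ^ (-lam) / lam := by
  rw [integral_Ici_eq_integral_Ioi,
    setIntegral_congr_fun measurableSet_Ioi (g := fun z => z ^ (-(1 + lam)))
      (fun z hz => by simp only [abs_of_pos (hc.trans hz), Real.rpow_neg (hc.trans hz).le]),
    integral_Ioi_rpow_of_lt (by linarith) hc, show -(1 + lam) + 1 = -lam by ring,
    neg_div_neg_eq]

lemma integrableOn_Iic_inv_abs_rpow (hlam : 0 < lam) {c : ℝ} (hc : 0 < c) :
    IntegrableOn (fun z : ℝ => (|z| ^ (1 + lam))⁻¹) (Iic (-c)) := by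
  have h := (Measure.measurePreserving_neg (volume : Measure ℝ)).integrableOn_comp_preimage
    (Homeomorph.neg ℝ).measurableEmbedding
    (f := fun z : ℝ => (|z| ^ (1 + lam))⁻¹) (s := Iic (-c))
  rw [← h]
  simpa [Function.comp_def] using integrableOn_Ici_inv_abs_rpow hlam hc

lemma integral_Iic_inv_abs_rpow (hlam : 0 < lam) {c : ℝ} (hc : 0 < c) :
    ∫ z in Iic (-c), (|z| ^ (1 + lam))⁻¹ = c ^ (-lam) / lam := by
  rw [← integral_comp_neg_Ioi, ← integral_Ici_eq_integral_Ioi]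
  simpa using integral_Ici_inv_abs_rpow hlam hc

lemma compl_Ioo_eq_Iic_union_Ici {p q : ℝ} : (Ioo p q)ᶜ = Iic p ∪ Ici q := by
  ext z; simp only [mem_compl_iff, mem_Ioo, not_and_or, not_lt, mem_union, mem_Iic, mem_Ici]

lemma integrableOn_compl_Ioo_inv_abs_rpow (hlam : 0 < lam) {p q : ℝ} (hp : 0 < p) (hq : 0 < q) :
    IntegrableOn (fun z : ℝ => (|z| ^ (1 + lam))⁻¹) (Ioo (-p) q)ᶜ := by
  rw [compl_Ioo_eq_Iic_union_Ici]
  exact (integrableOn_Iic_inv_abs_rpow hlam hp).union (integrableOn_Ici_inv_abs_rpow hlam hq)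

lemma integral_compl_Ioo_inv_abs_rpow (hlam : 0 < lam) {p q : ℝ} (hp : 0 < p) (hq : 0 < q) :
    ∫ z in (Ioo (-p) q)ᶜ, (|z| ^ (1 + lam))⁻¹ = (p ^ (-lam) + q ^ (-lam)) / lam := by
  rw [compl_Ioo_eq_Iic_union_Ici, setIntegral_union (Iic_disjoint_Ici.mpr (by linarith))
    measurableSet_Ici (integrableOn_Iic_inv_abs_rpow hlam hp)
    (integrableOn_Ici_inv_abs_rpow hlam hq), integral_Iic_inv_abs_rpow hlam hp,
    integral_Ici_inv_abs_rpow hlam hq, add_div]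

end Kernel

section FracLap

variable (clam lam : ℝ)

lemma fracLap_indicator_of_mem {S : Set ℝ} (hS : MeasurableSet S) {x : ℝ} (hx : x ∈ S) :
    fracLap clam lam (S.indicator 1) x
      = -(clam * ∫ z in (x + ·) ⁻¹' Sᶜ, (|z| ^ (1 + lam))⁻¹) := by
  rw [fracLap, restrict_compl_singleton, ← integral_indicator (hS.compl.preimage
    (measurable_const_add x)), ← mul_neg, ← integral_neg]
  congr 1
  refine integral_congr_ae (Eventually.of_forall fun z => ?_)
  by_cases hz : x + z ∈ S <;> simp [hx, hz, neg_div]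

lemma fracLap_indicator_of_notMem {S : Set ℝ} (hS : MeasurableSet S) {x : ℝ} (hx : x ∉ S) :
    fracLap clam lam (S.indicator 1) x
      = clam * ∫ z in (x + ·) ⁻¹' S, (|z| ^ (1 + lam))⁻¹ := by
  rw [fracLap, restrict_compl_singleton, ← integral_indicator (hS.preimage
    (measurable_const_add x))]
  congr 1
  refine integral_congr_ae (Eventually.of_forall fun z => ?_)
  by_cases hz : x + z ∈ S <;> simp [hx, hz]

variable {clam lam}

lemma fracLap_indicator_Ioo (hlam : 0 < lam) {l r x : ℝ} (hx : x ∈ Ioo l r) :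
    fracLap clam lam ((Ioo l r).indicator 1) x
      = -(clam / lam) * ((x - l) ^ (-lam) + (r - x) ^ (-lam)) := by
  rw [fracLap_indicator_of_mem clam lam measurableSet_Ioo hx, preimage_compl,
    preimage_const_add_Ioo, ← neg_sub x l,
    integral_compl_Ioo_inv_abs_rpow hlam (sub_pos.mpr hx.1) (sub_pos.mpr hx.2)]
  ring

lemma fracLap_nonneg_of_forall_le (hclam : 0 ≤ clam) {φ : ℝ → ℝ} {x : ℝ}
    (hφ : ∀ y, φ x ≤ φ y) : 0 ≤ fracLap clam lam φ x :=
  mul_nonneg hclam <| integral_nonneg fun z =>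
    div_nonneg (sub_nonneg.mpr (hφ _)) (Real.rpow_nonneg (abs_nonneg z) _)

lemma fracLap_indicator_le_neg_of_disjoint (hlam : 0 < lam) (hclam : 0 ≤ clam) {S : Set ℝ}
    (hS : MeasurableSet S) {l r x : ℝ} (hSlr : Disjoint S (Ioo l r)) (hx : x ∈ Ioo l r) :
    fracLap clam lam (S.indicator 1) x ≤ -fracLap clam lam ((Ioo l r).indicator 1) x := by
  have hxS : x ∉ S := fun h => hSlr.notMem_of_mem_left h hx
  rw [fracLap_indicator_of_notMem clam lam hS hxS,
    fracLap_indicator_of_mem clam lam measurableSet_Ioo hx, neg_neg]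
  refine mul_le_mul_of_nonneg_left (setIntegral_mono_set ?_ ?_ ?_) hclam
  · rw [preimage_compl, preimage_const_add_Ioo, ← neg_sub x l]
    exact integrableOn_compl_Ioo_inv_abs_rpow hlam (sub_pos.mpr hx.1) (sub_pos.mpr hx.2)
  · exact Eventually.of_forall fun z => inv_nonneg.mpr (Real.rpow_nonneg (abs_nonneg z) _)
  · exact Eventually.of_forall (preimage_mono hSlr.subset_compl_right)

end FracLap

lemma integral_abs_lt_one_abs_rpow {s : ℝ} (hs : -1 < s) :
    ∫ z in {z : ℝ | |z| < 1}, |z| ^ s = 2 / (s + 1) := by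
  have hind : ∀ z : ℝ, {z : ℝ | |z| < 1}.indicator (fun z => |z| ^ s) z
      = (Iio 1).indicator (fun t => t ^ s) |z| := fun z => by
    by_cases h : |z| < 1 <;> simp [indicator, h]
  rw [← integral_indicator (measurableSet_lt continuous_abs.measurable measurable_const),
    funext hind, integral_comp_abs, setIntegral_indicator measurableSet_Iio, Ioi_inter_Iio,
    ← integral_Ioc_eq_integral_Ioo, ← intervalIntegral.integral_of_le zero_le_one,
    integral_rpow (Or.inl hs), Real.one_rpow, Real.zero_rpow (by linarith)]
  ring

lemma integral_one_lt_abs_abs_rpow {s : ℝ} (hs : s < -1) :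
    ∫ z in {z : ℝ | 1 < |z|}, |z| ^ s = -2 / (s + 1) := by
  have hind : ∀ z : ℝ, {z : ℝ | 1 < |z|}.indicator (fun z => |z| ^ s) z
      = (Ioi 1).indicator (fun t => t ^ s) |z| := fun z => by
    by_cases h : 1 < |z| <;> simp [indicator, h]
  rw [← integral_indicator (measurableSet_lt measurable_const continuous_abs.measurable),
    funext hind, integral_comp_abs, setIntegral_indicator measurableSet_Ioi,
    Ioi_inter_Ioi, sup_of_le_right zero_le_one, integral_Ioi_rpow_of_lt hs one_pos,
    Real.one_rpow]
  ring

lemma dlam_eq {lam : ℝ} (hlam0 : 0 < lam) (hlam1 : lam < 1) (clam : ℝ) :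
    dlam clam lam = clam * (2 / (1 - lam) + 2 / lam) := by
  rw [dlam, integral_abs_lt_one_abs_rpow (by linarith),
    integral_one_lt_abs_abs_rpow (by linarith)]
  congr 2 <;> ring_nf

section SelfInteraction

variable {lam : ℝ}

lemma intervalIntegrable_rpow_dist_left (hlam1 : lam < 1) (l r : ℝ) :
    IntervalIntegrable (fun x => (x - l) ^ (-lam)) volume l r := by
  simpa using (intervalIntegral.intervalIntegrable_rpow' (a := 0) (b := r - l)
    (by linarith : -1 < -lam)).comp_sub_right l

lemma intervalIntegrable_rpow_dist_right (hlam1 : lam < 1) (l r : ℝ) :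
    IntervalIntegrable (fun x => (r - x) ^ (-lam)) volume l r := by
  simpa using ((intervalIntegral.intervalIntegrable_rpow' (a := 0) (b := r - l)
    (by linarith : -1 < -lam)).comp_sub_left r).symm

lemma integral_rpow_neg_of_lt_one (hlam1 : lam < 1) (h : ℝ) :
    ∫ t in (0 : ℝ)..h, t ^ (-lam) = h ^ (1 - lam) / (1 - lam) := by
  rw [integral_rpow (Or.inl (by linarith)), Real.zero_rpow (by linarith), sub_zero,
    neg_add_eq_sub]

lemma integral_rpow_dist_left (hlam1 : lam < 1) (l r : ℝ) :
    ∫ x in l..r, (x - l) ^ (-lam) = (r - l) ^ (1 - lam) / (1 - lam) := by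
  rw [intervalIntegral.integral_comp_sub_right (fun t => t ^ (-lam)), sub_self,
    integral_rpow_neg_of_lt_one hlam1]

lemma integral_rpow_dist_right (hlam1 : lam < 1) (l r : ℝ) :
    ∫ x in l..r, (r - x) ^ (-lam) = (r - l) ^ (1 - lam) / (1 - lam) := by
  rw [intervalIntegral.integral_comp_sub_left (fun t => t ^ (-lam)), sub_self,
    integral_rpow_neg_of_lt_one hlam1]

lemma integrableOn_fracLap_indicator_Ioo (hlam0 : 0 < lam) (hlam1 : lam < 1) (clam : ℝ)
    {l r : ℝ} (hlr : l ≤ r) :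
    IntegrableOn (fracLap clam lam ((Ioo l r).indicator 1)) (Ioo l r) := by
  have hg := ((intervalIntegrable_rpow_dist_left hlam1 l r).add
    (intervalIntegrable_rpow_dist_right hlam1 l r)).const_mul (-(clam / lam))
  refine (((intervalIntegrable_iff_integrableOn_Ioc_of_le hlr).1 hg).mono_set
    Ioo_subset_Ioc_self).congr_fun (fun x hx => ?_) measurableSet_Ioo
  exact (fracLap_indicator_Ioo hlam0 hx).symm

lemma integral_fracLap_indicator_Ioo (hlam0 : 0 < lam) (hlam1 : lam < 1) (clam : ℝ)
    {l r : ℝ} (hlr : l ≤ r) :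
    ∫ x in Ioo l r, fracLap clam lam ((Ioo l r).indicator 1) x
      = -(dlam clam lam * (r - l) ^ (1 - lam)) := by
  rw [setIntegral_congr_fun measurableSet_Ioo (fun x hx => fracLap_indicator_Ioo hlam0 hx),
    ← integral_Ioc_eq_integral_Ioo, ← intervalIntegral.integral_of_le hlr,
    intervalIntegral.integral_const_mul, intervalIntegral.integral_add
      (intervalIntegrable_rpow_dist_left hlam1 l r) (intervalIntegrable_rpow_dist_right hlam1 l r),
    integral_rpow_dist_left hlam1, integral_rpow_dist_right hlam1, dlam_eq hlam0 hlam1]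
  have : 1 - lam ≠ 0 := (sub_pos.mpr hlam1).ne'
  field_simp
  ring

end SelfInteraction

section Weights

variable {clam lam Δx : ℝ}

lemma disjoint_cells (hΔx : 0 ≤ Δx) {i j : ℤ} (hij : i ≠ j) :
    Disjoint (Ioo ((j : ℝ) * Δx) (((j : ℝ) + 1) * Δx))
      (Ioo ((i : ℝ) * Δx) (((i : ℝ) + 1) * Δx)) := by
  rw [Ioo_disjoint_Ioo]
  rcases hij.lt_or_gt with h | h
  · have : (i : ℝ) + 1 ≤ j := by exact_mod_cast h
    exact (min_le_right _ _).trans ((by nlinarith : ((i : ℝ) + 1) * Δx ≤ j * Δx).trans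
      (le_max_left _ _))
  · have : (j : ℝ) + 1 ≤ i := by exact_mod_cast h
    exact (min_le_left _ _).trans ((by nlinarith : ((j : ℝ) + 1) * Δx ≤ i * Δx).trans
      (le_max_right _ _))

lemma Gw_self (hlam0 : 0 < lam) (hlam1 : lam < 1) (hΔx : 0 ≤ Δx) (i : ℤ) :
    Gw clam lam Δx i i = -(dlam clam lam * Δx ^ (1 - lam)) := by
  rw [Gw, cellInd, integral_fracLap_indicator_Ioo hlam0 hlam1 clam (by nlinarith)]
  ring_nf

lemma fracLap_cellInd_nonneg (hclam : 0 ≤ clam) (hΔx : 0 ≤ Δx) {i j : ℤ} (hij : i ≠ j) {x : ℝ}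
    (hx : x ∈ Ioo ((i : ℝ) * Δx) (((i : ℝ) + 1) * Δx)) :
    0 ≤ fracLap clam lam (cellInd Δx j) x :=
  fracLap_nonneg_of_forall_le hclam fun y => by
    rw [cellInd, indicator_of_notMem ((disjoint_cells hΔx hij).notMem_of_mem_right hx)]
    exact indicator_nonneg (fun _ _ => zero_le_one) y

lemma Gw_nonneg_of_ne (hclam : 0 ≤ clam) (hΔx : 0 ≤ Δx) {i j : ℤ} (hij : i ≠ j) :
    0 ≤ Gw clam lam Δx i j :=
  setIntegral_nonneg measurableSet_Ioo fun _ hx => fracLap_cellInd_nonneg hclam hΔx hij hx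

lemma Gw_le_neg_Gw_self (hlam0 : 0 < lam) (hlam1 : lam < 1) (hclam : 0 ≤ clam)
    (hΔx : 0 ≤ Δx) {i j : ℤ} (hij : i ≠ j) :
    Gw clam lam Δx i j ≤ -Gw clam lam Δx i i := by
  rw [Gw, Gw, ← integral_neg]
  refine integral_mono_of_nonneg ?_ ?_ ?_
  · exact ae_restrict_of_forall_mem measurableSet_Ioo fun _ hx =>
      fracLap_cellInd_nonneg hclam hΔx hij hx
  · rw [cellInd]
    exact (integrableOn_fracLap_indicator_Ioo hlam0 hlam1 clam (by nlinarith)).neg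
  · exact ae_restrict_of_forall_mem measurableSet_Ioo fun _ hx =>
      fracLap_indicator_le_neg_of_disjoint hlam0 hclam measurableSet_Ioo
        (disjoint_cells hΔx hij) hx

lemma dlam_nonneg (hlam0 : 0 < lam) (hlam1 : lam < 1) (hclam : 0 ≤ clam) :
    0 ≤ dlam clam lam := by
  have := sub_pos.mpr hlam1
  rw [dlam_eq hlam0 hlam1]
  positivity

lemma abs_Gw_le (hlam0 : 0 < lam) (hlam1 : lam < 1) (hclam : 0 ≤ clam) (hΔx : 0 ≤ Δx)
    (i j : ℤ) : |Gw clam lam Δx i j| ≤ dlam clam lam * Δx ^ (1 - lam) := by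
  have hself := Gw_self (clam := clam) hlam0 hlam1 hΔx i
  obtain rfl | hij := eq_or_ne i j
  · rw [hself, abs_neg, abs_of_nonneg (by have := dlam_nonneg hlam0 hlam1 hclam; positivity)]
  · rw [abs_of_nonneg (Gw_nonneg_of_ne hclam hΔx hij), ← neg_neg (_ * _), ← hself]
    exact Gw_le_neg_Gw_self hlam0 hlam1 hclam hΔx hij

lemma summable_Gw_mul (hlam0 : 0 < lam) (hlam1 : lam < 1) (hclam : 0 ≤ clam) (hΔx : 0 ≤ Δx)
    {U : ℤ → ℝ} (hU : Summable U) (i : ℤ) : Summable fun j => Gw clam lam Δx i j * U j :=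
  Summable.of_norm_bounded (hU.abs.mul_left _) fun j => by
    rw [norm_mul, Real.norm_eq_abs, Real.norm_eq_abs]
    exact mul_le_mul_of_nonneg_right (abs_Gw_le hlam0 hlam1 hclam hΔx i j) (abs_nonneg _)

lemma neg_mul_le_tsum_Gw_mul_sub (hlam0 : 0 < lam) (hlam1 : lam < 1) (hclam : 0 ≤ clam)
    (hΔx : 0 ≤ Δx) {U V : ℤ → ℝ} (hU : Summable U) (hV : Summable V) (hUV : ∀ j, U j ≤ V j)
    (i : ℤ) :
    -(dlam clam lam * Δx ^ (1 - lam)) * (V i - U i)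
      ≤ ∑' j, Gw clam lam Δx i j * V j - ∑' j, Gw clam lam Δx i j * U j := by
  have hsum := summable_Gw_mul hlam0 hlam1 hclam hΔx (hV.sub hU) i
  rw [← (summable_Gw_mul hlam0 hlam1 hclam hΔx hV i).tsum_sub
      (summable_Gw_mul hlam0 hlam1 hclam hΔx hU i)]
  simp_rw [← mul_sub]
  rw [hsum.tsum_eq_add_tsum_ite i, ← Gw_self hlam0 hlam1 hΔx i]
  refine le_add_of_nonneg_right (tsum_nonneg fun j => ?_)
  split_ifs with hji
  · rfl
  · exact mul_nonneg (Gw_nonneg_of_ne hclam hΔx (Ne.symm hji)) (sub_nonneg.mpr (hUV j))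

end Weights

lemma abs_sub_le_of_abs_deriv_le {f : ℝ → ℝ} {M : ℝ} (hf : Differentiable ℝ f)
    (hM : ∀ x, |deriv f x| ≤ M) (x y : ℝ) : |f y - f x| ≤ M * |y - x| :=
  Convex.norm_image_sub_le_of_norm_deriv_le (fun x _ => hf x) (fun x _ => hM x) convex_univ
    trivial trivial

lemma numFlux_increment_le {g : ℝ → ℝ → ℝ} {M1 M2 : ℝ}
    (hmono1 : ∀ v, Monotone fun u => g u v) (hmono2 : ∀ u, Antitone fun v => g u v)
    (hlip1 : ∀ u u' v, |g u' v - g u v| ≤ M1 * |u' - u|)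
    (hlip2 : ∀ u v v', |g u v' - g u v| ≤ M2 * |v' - v|)
    {um u up vm v vp : ℝ} (hm : um ≤ vm) (h : u ≤ v) (hp : up ≤ vp) :
    (g v vp - g vm v) - (g u up - g um u) ≤ (M1 + M2) * (v - u) := by
  have h1 := (le_abs_self _).trans (hlip1 u v vp)
  have h2 := (neg_le_abs _).trans (hlip2 um u v)
  have h3 : g u vp ≤ g u up := hmono2 u hp
  have h4 : g um v ≤ g vm v := hmono1 v hm
  rw [abs_of_nonneg (sub_nonneg.mpr h)] at h1 h2
  linarith

lemma Aint_sub_Aint {a : ℝ → ℝ} (ha : Continuous a) (u v : ℝ) :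
    Aint a v - Aint a u = ∫ s in u..v, a s :=
  intervalIntegral.integral_interval_sub_left (ha.intervalIntegrable _ _)
    (ha.intervalIntegrable _ _)

lemma Aint_sub_nonneg_of_le {a : ℝ → ℝ} (ha : Continuous a) (ha0 : ∀ s, 0 ≤ a s) {u v : ℝ}
    (huv : u ≤ v) : 0 ≤ Aint a v - Aint a u := by
  rw [Aint_sub_Aint ha]
  exact intervalIntegral.integral_nonneg huv fun s _ => ha0 s

lemma Aint_sub_le_of_le {a : ℝ → ℝ} {Ma : ℝ} (ha : Continuous a) (hMa : ∀ s, |a s| ≤ Ma)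
    {u v : ℝ} (huv : u ≤ v) : Aint a v - Aint a u ≤ Ma * (v - u) := by
  rw [Aint_sub_Aint ha, ← abs_of_nonneg (sub_nonneg.mpr huv)]
  have hnorm := intervalIntegral.norm_integral_le_of_norm_le_const (a := u) (b := v) (f := a)
    fun s _ => (Real.norm_eq_abs (a s)).trans_le (hMa s)
  exact (le_abs_self _).trans hnorm

/-- Under the CFL condition the one-step scheme map is monotone: `U ≤ V` componentwise
implies `S(U) ≤ S(V)` componentwise. -/
theorem scheme_monotone (lam : ℝ) (hlam : lam ∈ Set.Ioo (0 : ℝ) 1)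
    (clam : ℝ) (hclam : 0 < clam) (Δx Δt : ℝ) (hΔx : 0 < Δx) (hΔt : 0 < Δt)
    (b : ℝ) (hb : 0 ≤ b) (f a : ℝ → ℝ) (fhat : ℝ → ℝ → ℝ)
    (hdata : SchemeData f a fhat)
    (hcfl : CFL clam lam Δx Δt b fhat a)
    (U V : ℤ → ℝ) (hU : Summable U) (hV : Summable V) (hUV : ∀ j : ℤ, U j ≤ V j) :
    ∀ i : ℤ, schemeStep clam lam Δx Δt b fhat a U i ≤ schemeStep clam lam Δx Δt b fhat a V i := by
  obtain ⟨hlam0, hlam1⟩ := hlam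
  obtain ⟨hC1, M1, M2, Ma, hM1, hM2, hMa, hCFL⟩ := hcfl
  obtain ⟨_, ha⟩ := hdata.haLip
  have hdiff := hC1.differentiable one_ne_zero
  have hlip1 : ∀ u u' v, |fhat u' v - fhat u v| ≤ M1 * |u' - u| := fun u u' v =>
    abs_sub_le_of_abs_deriv_le (hdiff.comp (differentiable_id.prodMk (differentiable_const v)))
      (hM1 · v) u u'
  have hlip2 : ∀ u v v', |fhat u v' - fhat u v| ≤ M2 * |v' - v| := fun u v v' =>
    abs_sub_le_of_abs_deriv_le (hdiff.comp ((differentiable_const u).prodMk differentiable_id))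
      (hM2 u ·) v v'
  rw [show b * dlam clam lam * Δt / Δx ^ lam = b * Δt / Δx * (dlam clam lam * Δx ^ (1 - lam)) by
    rw [Real.rpow_sub hΔx, Real.rpow_one]; field_simp] at hCFL
  intro i
  have hflux := numFlux_increment_le hdata.hmono1 hdata.hmono2 hlip1 hlip2
    (hUV (i - 1)) (hUV i) (hUV (i + 1))
  have hdiffusion : -(2 * Ma * (V i - U i))
      ≤ (Aint a (V (i + 1)) - 2 * Aint a (V i) + Aint a (V (i - 1)))
        - (Aint a (U (i + 1)) - 2 * Aint a (U i) + Aint a (U (i - 1))) := by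
    linarith [Aint_sub_nonneg_of_le ha.continuous hdata.haNonneg (hUV (i - 1)),
      Aint_sub_le_of_le ha.continuous hMa (hUV i),
      Aint_sub_nonneg_of_le ha.continuous hdata.haNonneg (hUV (i + 1))]
  have hnonlocal := neg_mul_le_tsum_Gw_mul_sub hlam0 hlam1 hclam.le hΔx.le hU hV hUV i
  simp only [schemeStep]
  linear_combination mul_le_mul_of_nonneg_left hflux (by positivity : 0 ≤ Δt / Δx)
    + mul_le_mul_of_nonneg_left hdiffusion (by positivity : 0 ≤ Δt / Δx ^ 2)
    + mul_le_mul_of_nonneg_left hnonlocal (by positivity : 0 ≤ b * Δt / Δx)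
    + mul_le_mul_of_nonneg_right hCFL (sub_nonneg.mpr (hUV i))
end
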